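/- arXiv:1706.03350 — 3 statements merged into one kernel-verified Lean document; each statement's English description precedes it below -/
import Mathlib

section
/- Let ℓ = k^s be an odd prime power (k an odd prime, s a positive integer), let p be a prime and let q be a positive integer such that p > q, p ≠ k and k ∤ (p − 1). If n is a positive integer with p − q ≤ n ≤ 2p − q − 1, then the product (1^ℓ + q^ℓ)(2^ℓ + q^ℓ) ⋯ (n^ℓ + q^ℓ) is not a powerful number. -/
/-!
Since `ℓ` is odd and coprime to `p - 1`, the map `x ↦ x ^ ℓ` is injective on `ZMod p`, so
`p ∣ a ^ ℓ + q ^ ℓ` iff `p ∣ a + q`; for `1 ≤ a ≤ 2p - q - 1` this singles out the factor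
`a = p - q`. Binomially, `(p - q) ^ ℓ + q ^ ℓ ≡ ℓ p q ^ (ℓ - 1) mod p²` with `p ∤ ℓ q`, so `p`
divides the product exactly once.
-/

/-- A positive integer `t` is powerful if `t > 1` and `p ^ 2 ∣ t`
for every prime divisor `p` of `t`. -/
def Powerful (t : ℕ) : Prop := 1 < t ∧ ∀ p : ℕ, p.Prime → p ∣ t → p ^ 2 ∣ t

lemma pow_left_injective_of_coprime_card_sub_one {G₀ : Type*} [GroupWithZero G₀] {n : ℕ}
    (hn : n ≠ 0) (hcop : (Nat.card G₀ - 1).Coprime n) :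
    Function.Injective (· ^ n : G₀ → G₀) := by
  intro x y (hxy : x ^ n = y ^ n)
  have hzero : x = 0 ↔ y = 0 := by rw [← pow_eq_zero_iff hn, hxy, pow_eq_zero_iff hn]
  by_cases hx : x = 0
  · exact hx.trans (hzero.mp hx).symm
  have hy : y ≠ 0 := mt hzero.mpr hx
  rw [← Nat.card_units] at hcop
  have hunits := hcop.pow_left_bijective.injective (a₁ := Units.mk0 x hx) (a₂ := Units.mk0 y hy)
    (Units.ext (by simpa using hxy))
  simpa using congrArg Units.val hunits

lemma Nat.Prime.dvd_pow_add_pow_iff {p n : ℕ} (hp : p.Prime) (hodd : Odd n)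
    (hcop : (p - 1).Coprime n) (a b : ℕ) : p ∣ a ^ n + b ^ n ↔ p ∣ a + b := by
  refine ⟨fun h => ?_, fun h => h.trans (hodd.nat_add_dvd_pow_add_pow a b)⟩
  have := Fact.mk hp
  have hinj := pow_left_injective_of_coprime_card_sub_one (G₀ := ZMod p) hodd.pos.ne'
    (by rwa [Nat.card_zmod])
  rw [← ZMod.natCast_eq_zero_iff] at h ⊢
  push_cast at h ⊢
  have hpow : (a : ZMod p) ^ n = (-(b : ZMod p)) ^ n := by
    rw [hodd.neg_pow]; linear_combination h
  linear_combination hinj hpow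

lemma Prime.not_sq_dvd_add_pow_sub_pow {R : Type*} [CommRing R] [IsDomain R] {p x : R}
    (hp : Prime p) (hx : ¬ p ∣ x) {n : ℕ} (hn : ¬ p ∣ (n : R)) :
    ¬ p ^ 2 ∣ (x + p) ^ n - x ^ n := by
  intro h
  have hsq : p * p ∣ p * (x ^ (n - 1) * n) := by
    rw [← sq]
    convert dvd_sub h (sq_dvd_add_pow_sub_sub p x n) using 1
    ring
  rcases hp.dvd_or_dvd ((mul_dvd_mul_iff_left hp.ne_zero).mp hsq) with hpx | hpn
  · exact hx (hp.dvd_of_dvd_pow hpx)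
  · exact hn hpn

lemma Nat.Prime.not_sq_dvd_sub_pow_add_pow {p q n : ℕ} (hp : p.Prime) (hodd : Odd n)
    (hpn : ¬ p ∣ n) (hq : 0 < q) (hqp : q < p) : ¬ p ^ 2 ∣ (p - q) ^ n + q ^ n := by
  have hpq : ¬ (p : ℤ) ∣ -(q : ℤ) := by
    rw [dvd_neg, Int.natCast_dvd_natCast]
    exact Nat.not_dvd_of_pos_of_lt hq hqp
  have h := (Nat.prime_iff_prime_int.mp hp).not_sq_dvd_add_pow_sub_pow hpq
    (by rwa [Int.natCast_dvd_natCast])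
  rw [hodd.neg_pow, sub_neg_eq_add, neg_add_eq_sub] at h
  rw [← Int.natCast_dvd_natCast]
  push_cast [hqp.le]
  exact h

lemma Prime.not_sq_dvd_prod_of_dvd_unique {ι M : Type*} [CommMonoidWithZero M]
    [IsCancelMulZero M] [DecidableEq ι] {p : M} (hp : Prime p) {s : Finset ι} {f : ι → M} {i : ι}
    (hi : i ∈ s) (hfi : ¬ p ^ 2 ∣ f i) (hunique : ∀ j ∈ s, p ∣ f j → j = i) :
    ¬ p ^ 2 ∣ ∏ j ∈ s, f j := by
  rw [← Finset.mul_prod_erase s f hi]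
  refine fun h => hfi (hp.pow_dvd_of_dvd_mul_right 2 (hp.not_dvd_finsetProd fun j hj => ?_) h)
  exact fun hdvd => Finset.ne_of_mem_erase hj (hunique j (Finset.mem_of_mem_erase hj) hdvd)

theorem stmt4_general (k s ℓ p q n : ℕ) (hk : k.Prime) (hkodd : Odd k)
    (hℓ : ℓ = k ^ s) (hp : p.Prime) (hq : 0 < q) (hpq : q < p) (hpk : p ≠ k)
    (hndvd : ¬ k ∣ (p - 1)) (h1 : p - q ≤ n) (h2 : n ≤ 2 * p - q - 1) :
    ¬ Powerful (∏ a ∈ Finset.Icc 1 n, (a ^ ℓ + q ^ ℓ)) := by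
  subst hℓ
  have hodd : Odd (k ^ s) := hkodd.pow
  have hcop : (p - 1).Coprime (k ^ s) :=
    (Nat.coprime_comm.mp (hk.coprime_iff_not_dvd.mpr hndvd)).pow_right s
  have hdvd_iff := hp.dvd_pow_add_pow_iff hodd hcop
  have hmem : p - q ∈ Finset.Icc 1 n := Finset.mem_Icc.mpr ⟨by omega, h1⟩
  have hp_dvd : p ∣ (p - q) ^ k ^ s + q ^ k ^ s :=
    (hdvd_iff _ _).mpr (by rw [Nat.sub_add_cancel hpq.le])
  have hunique : ∀ a ∈ Finset.Icc 1 n, p ∣ a ^ k ^ s + q ^ k ^ s → a = p - q := by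
    intro a ha hdvd
    have ha := Finset.mem_Icc.mp ha
    have := Nat.eq_of_dvd_of_lt_two_mul (by omega) ((hdvd_iff a q).mp hdvd) (by omega)
    omega
  have hsq : ¬ p ^ 2 ∣ (p - q) ^ k ^ s + q ^ k ^ s :=
    hp.not_sq_dvd_sub_pow_add_pow hodd
      (fun h => hpk ((Nat.prime_dvd_prime_iff_eq hp hk).mp (hp.dvd_of_dvd_pow h))) hq hpq
  exact fun ⟨_, hpow⟩ => Prime.not_sq_dvd_prod_of_dvd_unique hp.prime hmem hsq hunique
    (hpow p hp (hp_dvd.trans (Finset.dvd_prod_of_mem _ hmem)))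

theorem stmt4 (k s ℓ p q n : ℕ) (hk : k.Prime) (hkodd : Odd k) (hs : 0 < s)
    (hℓ : ℓ = k ^ s) (hp : p.Prime) (hq : 0 < q) (hpq : q < p) (hpk : p ≠ k)
    (hndvd : ¬ k ∣ (p - 1)) (hn : 0 < n) (h1 : p - q ≤ n) (h2 : n ≤ 2 * p - q - 1) :
    ¬ Powerful (∏ a ∈ Finset.Icc 1 n, (a ^ ℓ + q ^ ℓ)) :=
  stmt4_general k s ℓ p q n hk hkodd hℓ hp hq hpq hpk hndvd h1 h2
end

section
/- Let m be a positive integer with m ∉ {1, 3, 5, 9}. Then there exist at least two primes p with (m + 1)/2 < p ≤ m + 1. -/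
open Finset Real

/-!
Erdős's proof of Bertrand's postulate, with one prime allowed in `(n, 2n]`. Every prime power
dividing `C(2n, n)` is at most `2n`, primes in `(2n/3, n]` do not divide it, and primes in
`(√(2n), 2n/3]` divide it at most once; hence
`C(2n, n) ≤ (2n) ^ √(2n) * 4 ^ (2n/3) * (2n) ^ k`, where `k` is the number of primes in
`(n, 2n]`. If `k ≤ 1` this contradicts `4 ^ n < n * C(2n, n)` as soon as `n ≥ 512`; below that,
explicit pairs of primes cover every `n ≥ 4` except `n = 5`. For the theorem take
`n = ⌊(m + 1) / 2⌋`, so that `(n, 2n] ⊆ ((m + 1) / 2, m + 1]`.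
-/

namespace Bertrand

theorem concaveOn_log_add_sqrt_mul_log_sub :
    ConcaveOn ℝ (Set.Ioi (1 / 2))
      fun x => log x + (√(2 * x) * log (2 * x) + log (2 * x)) - log 4 / 3 * x := by
  have comp_two_mul {g : ℝ → ℝ} (hg : ConcaveOn ℝ (Set.Ioi 1) g) :
      ConcaveOn ℝ (Set.Ioi (1 / 2)) fun x => g (2 * x) :=
    (hg.comp_linearMap ((2 : ℝ) • (LinearMap.id : ℝ →ₗ[ℝ] ℝ))).subset
      (fun (y : ℝ) (hy : 1 / 2 < y) => show 1 < 2 * y by linarith) (convex_Ioi _)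
  have hlog := strictConcaveOn_log_Ioi.concaveOn
  refine ((hlog.subset (Set.Ioi_subset_Ioi (by norm_num)) (convex_Ioi _)).add
    ((comp_two_mul strictConcaveOn_sqrt_mul_log_Ioi.concaveOn).add
      (comp_two_mul (hlog.subset (Set.Ioi_subset_Ioi zero_le_one) (convex_Ioi _))))).sub ?_
  exact (convexOn_id (convex_Ioi _)).smul (div_nonneg (log_nonneg (by norm_num)) (by norm_num))

theorem real_main_inequality_sqrt_add_one {x : ℝ} (x_large : 512 ≤ x) :
    x * (2 * x) ^ (√(2 * x) + 1) * 4 ^ (2 * x / 3) ≤ 4 ^ x := by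
  let f : ℝ → ℝ := fun x => log x + (√(2 * x) * log (2 * x) + log (2 * x)) - log 4 / 3 * x
  have hf : ConcaveOn ℝ (Set.Ioi (1 / 2)) f := concaveOn_log_add_sqrt_mul_log_sub
  have hlog2 : 0 < log 2 := log_pos one_lt_two
  have hlog4 : log 4 = 2 * log 2 := by
    rw [show (4 : ℝ) = 2 ^ 2 by norm_num, log_pow, Nat.cast_ofNat]
  have hf2 : 0 ≤ f 2 := by
    have : √(2 * 2 : ℝ) = 2 := by
      rw [show (2 * 2 : ℝ) = 2 ^ 2 by norm_num, sqrt_sq zero_le_two]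
    simp only [f, this]
    rw [hlog4]
    linarith
  have hf512 : f 512 ≤ 0 := by
    have : √(2 * 512 : ℝ) = 32 := by
      rw [show (2 * 512 : ℝ) = 32 ^ 2 by norm_num, sqrt_sq (by norm_num)]
    simp only [f, this]
    rw [show (2 * 512 : ℝ) = 2 ^ 10 by norm_num, show (512 : ℝ) = 2 ^ 9 by norm_num, log_pow,
      log_pow, hlog4]
    push_cast
    linarith
  have hfx : f x ≤ 0 :=
    (hf.right_le_of_le_left'' (by norm_num) (show (1 / 2 : ℝ) < x by linarith)
      (by norm_num : (2 : ℝ) < 512) x_large (hf512.trans hf2)).trans hf512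
  have hx : 0 < x := by linarith
  rw [← log_le_log_iff (by positivity) (by positivity), log_mul (by positivity) (by positivity),
    log_mul hx.ne' (by positivity), log_rpow (by positivity), log_rpow (by positivity),
    log_rpow (by positivity)]
  linear_combination hfx

end Bertrand

theorem bertrand_main_inequality_sqrt_add_one {n : ℕ} (n_large : 512 ≤ n) :
    n * (2 * n) ^ (Nat.sqrt (2 * n) + 1) * 4 ^ (2 * n / 3) ≤ 4 ^ n := by
  rw [← @Nat.cast_le ℝ]
  simp only [Nat.cast_mul, Nat.cast_pow, Nat.cast_add, Nat.cast_one, ← Real.rpow_natCast,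
    Nat.cast_ofNat]
  refine le_trans ?_ (Bertrand.real_main_inequality_sqrt_add_one (by exact_mod_cast n_large))
  gcongr
  · exact_mod_cast Nat.one_le_iff_ne_zero.2 (by omega : 2 * n ≠ 0)
  · exact_mod_cast Real.nat_sqrt_le_real_sqrt
  · norm_num
  · exact Nat.cast_div_le.trans (by norm_cast)

namespace Nat

def bertrandPrimes (n : ℕ) : Finset ℕ := {p ∈ Ioc n (2 * n) | p.Prime}

theorem mem_bertrandPrimes {n p : ℕ} : p ∈ bertrandPrimes n ↔ n < p ∧ p ≤ 2 * n ∧ p.Prime := by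
  simp [bertrandPrimes, and_assoc]

theorem card_primesLE_le (n : ℕ) : #(primesLE n) ≤ n := by
  rw [primesLE_eq_filter_Icc_one]
  exact (card_filter_le _ _).trans (by simp)

theorem centralBinom_eq_prod_primesLE_mul_prod_bertrandPrimes {n : ℕ} (hn : 2 < n) :
    centralBinom n = (∏ p ∈ primesLE (2 * n / 3), p ^ (centralBinom n).factorization p) *
      ∏ p ∈ bertrandPrimes n, p ^ (centralBinom n).factorization p := by
  have hdisj : Disjoint (primesLE (2 * n / 3)) (bertrandPrimes n) := by
    refine disjoint_left.2 fun p hp hp' => ?_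
    rw [mem_primesLE] at hp
    rw [mem_bertrandPrimes] at hp'
    omega
  rw [← prod_union hdisj]
  refine ((prod_subset (fun p hp => ?_) fun p hp2n hp => ?_).trans
    (prod_pow_factorization_centralBinom n)).symm
  · rw [mem_union, mem_primesLE, mem_bertrandPrimes] at hp
    rw [mem_range]
    omega
  · rw [mem_union, mem_primesLE, mem_bertrandPrimes] at hp
    rw [mem_range] at hp2n
    by_cases hp' : p.Prime
    · simp only [hp', and_true] at hp
      rw [factorization_centralBinom_of_two_mul_self_lt_three_mul hn (by omega) (by omega),
        pow_zero]
    · rw [factorization_eq_zero_of_not_prime _ hp', pow_zero]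

theorem prod_primesLE_pow_factorization_centralBinom_le {n : ℕ} (hn : 0 < n) :
    ∏ p ∈ primesLE (2 * n / 3), p ^ (centralBinom n).factorization p ≤
      (2 * n) ^ sqrt (2 * n) * 4 ^ (2 * n / 3) := by
  rw [← prod_filter_mul_prod_filter_not _ (· ≤ sqrt (2 * n))]
  refine mul_le_mul' ?_ ?_
  · calc _ ≤ (2 * n) ^ #{p ∈ primesLE (2 * n / 3) | p ≤ sqrt (2 * n)} :=
          prod_le_pow_card _ _ _ fun p _ => pow_factorization_choose_le (by omega)
      _ ≤ (2 * n) ^ sqrt (2 * n) := by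
        refine Nat.pow_le_pow_right (by omega) ((card_le_card fun p hp => ?_).trans
          (card_primesLE_le _))
        rw [mem_filter, mem_primesLE] at hp
        exact mem_primesLE.2 ⟨hp.2, hp.1.2⟩
  · calc _ ≤ ∏ p ∈ primesLE (2 * n / 3) with ¬p ≤ sqrt (2 * n), p := by
          refine prod_le_prod' fun p hp => ?_
          rw [mem_filter] at hp
          refine (Nat.pow_le_pow_right (one_lt_of_mem_primesLE hp.1).le ?_).trans (pow_one p).le
          exact factorization_choose_le_one (sqrt_lt'.1 (not_le.1 hp.2))
      _ ≤ ∏ p ∈ primesLE (2 * n / 3), p :=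
          prod_le_prod_of_subset_of_one_le' (filter_subset _ _) fun p hp _ =>
            (one_lt_of_mem_primesLE hp).le
      _ ≤ 4 ^ (2 * n / 3) := primorial_le_four_pow _

theorem centralBinom_le_mul_pow_card_bertrandPrimes {n : ℕ} (hn : 2 < n) :
    centralBinom n ≤ (2 * n) ^ sqrt (2 * n) * 4 ^ (2 * n / 3) * (2 * n) ^ #(bertrandPrimes n) :=
  (centralBinom_eq_prod_primesLE_mul_prod_bertrandPrimes hn).trans_le
    (mul_le_mul' (prod_primesLE_pow_factorization_centralBinom_le (by omega))
      (prod_le_pow_card _ _ _ fun _ _ => pow_factorization_choose_le (by omega)))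

theorem two_le_card_bertrandPrimes_of_le {n : ℕ} (n_large : 512 ≤ n) :
    2 ≤ #(bertrandPrimes n) := by
  by_contra! h
  have hC : centralBinom n ≤ (2 * n) ^ (sqrt (2 * n) + 1) * 4 ^ (2 * n / 3) :=
    calc centralBinom n
        ≤ (2 * n) ^ sqrt (2 * n) * 4 ^ (2 * n / 3) * (2 * n) ^ #(bertrandPrimes n) :=
          centralBinom_le_mul_pow_card_bertrandPrimes (by omega)
      _ ≤ (2 * n) ^ sqrt (2 * n) * 4 ^ (2 * n / 3) * (2 * n) ^ 1 := by
          gcongr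
          · omega
          · omega
      _ = (2 * n) ^ (sqrt (2 * n) + 1) * 4 ^ (2 * n / 3) := by ring
  have := (four_pow_lt_mul_centralBinom n (by omega)).trans_le (Nat.mul_le_mul_left n hC)
  rw [← mul_assoc] at this
  exact this.not_ge (bertrand_main_inequality_sqrt_add_one n_large)

theorem two_le_card_bertrandPrimes_of_lt {n p q : ℕ} (hp : p.Prime) (hq : q.Prime) (hpq : p < q)
    (hnp : n < p) (hqn : q ≤ 2 * n) : 2 ≤ #(bertrandPrimes n) :=
  one_lt_card.2 ⟨p, mem_bertrandPrimes.2 ⟨hnp, by omega, hp⟩,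
    q, mem_bertrandPrimes.2 ⟨by omega, hqn, hq⟩, hpq.ne⟩

theorem two_le_card_bertrandPrimes_succ {n : ℕ} (r : ℕ) {p q : ℕ} (hp : p.Prime) (hq : q.Prime)
    (hpq : p < q) (covering : q ≤ 2 * r) (H : n < r → 2 ≤ #(bertrandPrimes n)) (hn : n < p) :
    2 ≤ #(bertrandPrimes n) := by
  rcases le_or_gt q (2 * n) with h | h
  · exact two_le_card_bertrandPrimes_of_lt hp hq hpq hn h
  · exact H (by omega)

theorem two_le_card_bertrandPrimes {n : ℕ} (h4 : 4 ≤ n) (h5 : n ≠ 5) :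
    2 ≤ #(bertrandPrimes n) := by
  rcases le_or_gt 512 n with h | h
  · exact two_le_card_bertrandPrimes_of_le h
  replace h : n < 521 := by omega
  revert h
  refine two_le_card_bertrandPrimes_succ 263 (q := 523) (by norm_num) (by norm_num) (by norm_num)
    (by norm_num) ?_
  refine two_le_card_bertrandPrimes_succ 137 (q := 269) (by norm_num) (by norm_num) (by norm_num)
    (by norm_num) ?_
  refine two_le_card_bertrandPrimes_succ 71 (q := 139) (by norm_num) (by norm_num) (by norm_num)
    (by norm_num) ?_
  refine two_le_card_bertrandPrimes_succ 37 (q := 73) (by norm_num) (by norm_num) (by norm_num)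
    (by norm_num) ?_
  refine two_le_card_bertrandPrimes_succ 23 (q := 41) (by norm_num) (by norm_num) (by norm_num)
    (by norm_num) ?_
  refine two_le_card_bertrandPrimes_succ 17 (q := 29) (by norm_num) (by norm_num) (by norm_num)
    (by norm_num) ?_
  refine two_le_card_bertrandPrimes_succ 11 (q := 19) (by norm_num) (by norm_num) (by norm_num)
    (by norm_num) ?_
  refine two_le_card_bertrandPrimes_succ 7 (q := 13) (by norm_num) (by norm_num) (by norm_num)
    (by norm_num) ?_
  refine two_le_card_bertrandPrimes_succ 6 (q := 11) (by norm_num) (by norm_num) (by norm_num)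
    (by norm_num) ?_
  exact fun h => two_le_card_bertrandPrimes_of_lt (p := 5) (q := 7) (by norm_num) (by norm_num)
    (by norm_num) (by omega) (by omega)

end Nat

theorem stmt7 (m : ℕ) (hm : 0 < m) (h1 : m ≠ 1) (h3 : m ≠ 3) (h5 : m ≠ 5)
    (h9 : m ≠ 9) :
    2 ≤ ((Finset.Icc 1 (m + 1)).filter
      (fun p => p.Prime ∧ m + 1 < 2 * p)).card := by
  rcases le_or_gt m 10 with hm10 | hm10
  · interval_cases m <;> first | decide | contradiction
  refine (Nat.two_le_card_bertrandPrimes (n := (m + 1) / 2) (by omega) (by omega)).trans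
    (card_le_card fun p hp => ?_)
  rw [Nat.mem_bertrandPrimes] at hp
  rw [mem_filter, mem_Icc]
  exact ⟨⟨by omega, by omega⟩, hp.2.2, by omega⟩
end

section
/- Let q be a positive integer, let ℓ be an odd positive integer, and let p be a prime with ℓ odd, gcd(ℓ, p − 1) = 1, p ∤ ℓ and p ∤ q. Suppose a is a positive integer such that p divides (a^ℓ + q^ℓ)/(a + q). Then a contradiction follows; equivalently, p never divides (a^ℓ + q^ℓ)/(a + q) under these hypotheses. -/
theorem stmt16 (q ℓ p a : ℕ) (hq : 0 < q) (hℓpos : 0 < ℓ) (hℓodd : Odd ℓ)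
    (hp : p.Prime) (hgcd : Nat.gcd ℓ (p - 1) = 1) (hpℓ : ¬ p ∣ ℓ)
    (hpq : ¬ p ∣ q) (ha : 0 < a) :
    ¬ p ∣ (a ^ ℓ + q ^ ℓ) / (a + q) := by
  haveI : Fact p.Prime := ⟨hp⟩
  intro hdvd
  have hdiv : (a + q) ∣ a ^ ℓ + q ^ ℓ := Odd.nat_add_dvd_pow_add_pow a q hℓodd
  set N : ℕ := (a ^ ℓ + q ^ ℓ) / (a + q) with hN
  have heq : (a + q) * N = a ^ ℓ + q ^ ℓ := Nat.mul_div_cancel' hdiv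
  -- p divides a^ℓ + q^ℓ
  have hptot : p ∣ a ^ ℓ + q ^ ℓ := heq ▸ Dvd.dvd.mul_left hdvd (a + q)
  -- in ZMod p
  have hq0 : (q : ZMod p) ≠ 0 := fun h => hpq ((ZMod.natCast_eq_zero_iff q p).mp h)
  have hsum0 : ((a : ZMod p)) ^ ℓ + (q : ZMod p) ^ ℓ = 0 := by
    have := (ZMod.natCast_eq_zero_iff (a ^ ℓ + q ^ ℓ) p).mpr hptot
    push_cast at this
    exact this
  have ha0 : (a : ZMod p) ≠ 0 := by
    intro h
    rw [h, zero_pow hℓpos.ne', zero_add, pow_eq_zero_iff hℓpos.ne'] at hsum0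
    exact hq0 hsum0
  -- units
  have hpowinj : ∀ x y : (ZMod p)ˣ, x ^ ℓ = y ^ ℓ → x = y := by
    intro x y hxy
    have hcop : (Nat.card (ZMod p)ˣ).Coprime ℓ := by
      rw [Nat.card_eq_fintype_card, ZMod.card_units p]
      exact (Nat.coprime_comm.mp hgcd)
    exact (powCoprime hcop).injective hxy
  have key : (a : ZMod p) = -(q : ZMod p) := by
    have hpow : (a : ZMod p) ^ ℓ = (-(q : ZMod p)) ^ ℓ := by
      rw [hℓodd.neg_pow]
      linear_combination hsum0
    have hnq0 : (-(q : ZMod p)) ≠ 0 := neg_ne_zero.mpr hq0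
    have := hpowinj (Units.mk0 _ ha0) (Units.mk0 _ hnq0) (by ext; push_cast; exact hpow)
    simpa using congrArg Units.val this
  -- now go to ℤ to identify N with the geometric sum
  have hgeom : ((a : ℤ) + q) * (∑ i ∈ Finset.range ℓ, (a : ℤ) ^ i * (-(q : ℤ)) ^ (ℓ - 1 - i))
      = (a : ℤ) ^ ℓ + (q : ℤ) ^ ℓ := by
    have := geom_sum₂_mul (a : ℤ) (-(q : ℤ)) ℓ
    rw [hℓodd.neg_pow] at this
    linear_combination this
  have heqZ : ((a : ℤ) + q) * (N : ℤ) = (a : ℤ) ^ ℓ + (q : ℤ) ^ ℓ := by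
    exact_mod_cast congrArg (fun n : ℕ => (n : ℤ)) heq
  have hne : ((a : ℤ) + q) ≠ 0 := by positivity
  have hNS : (N : ℤ) = ∑ i ∈ Finset.range ℓ, (a : ℤ) ^ i * (-(q : ℤ)) ^ (ℓ - 1 - i) :=
    mul_left_cancel₀ hne (heqZ.trans hgeom.symm)
  -- reduce mod p
  have hNzero : ((N : ℤ) : ZMod p) = 0 := by
    rw [ZMod.intCast_zmod_eq_zero_iff_dvd]
    exact_mod_cast Int.natCast_dvd_natCast.mpr hdvd
  rw [hNS] at hNzero
  push_cast at hNzero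
  have hterm : ∀ i ∈ Finset.range ℓ,
      (a : ZMod p) ^ i * (-(q : ZMod p)) ^ (ℓ - 1 - i) = (-(q : ZMod p)) ^ (ℓ - 1) := by
    intro i hi
    rw [key, ← pow_add]
    congr 1
    have := Finset.mem_range.mp hi
    omega
  rw [Finset.sum_congr rfl hterm, Finset.sum_const, Finset.card_range, nsmul_eq_mul] at hNzero
  have hℓ0 : (ℓ : ZMod p) ≠ 0 := fun h => hpℓ ((ZMod.natCast_eq_zero_iff ℓ p).mp h)
  have hpow0 : (-(q : ZMod p)) ^ (ℓ - 1) ≠ 0 :=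
    pow_ne_zero _ (neg_ne_zero.mpr hq0)
  exact (mul_ne_zero hℓ0 hpow0) hNzero
end
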